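/- arXiv:2505.05014 — 2 statements merged into one kernel-verified Lean document; each statement's English description precedes it below -/
import Mathlib

section
/- Let n ≥ 3 be odd and let A, Â ∈ [−1,1]^{n×n} both be skew-symmetric of rank n−1, each admitting a nonzero vector x with xᵀ times the matrix equal to 0ᵀ and Σᵢ xᵢ ≠ 0. Let π, π̂ ∈ S_n satisfy πᵀA = 0ᵀ and π̂ᵀÂ = 0ᵀ. Suppose π̂ ∈ S_n⁺⁺. If max_{i,j} |â_ij − a_ij| < π̂_min / φ(Â), where π̂_min = minᵢ π̂ᵢ, then π ∈ S_n⁺⁺. -/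
/-!
Let `z_j = 1ᵀÂ_j⁻¹ − π̂ᵀ`. Then `z_j Â = 1ᵀ − e_jᵀ / π̂_j`, so every zero-sum `w` is recovered from
`v = wÂ` as `w = −∑_j π̂_j v_j z_j`, giving `|w_i| ≤ φ(Â) ∑_j π̂_j |v_j|`. If `q` is a null
probability vector of `Â − G` with `|G_ij| ≤ c`, then `w = q − π̂` has `v = qG`, so
`|q_i − π̂_i| ≤ φ(Â) c < π̂_min` and `q > 0`, provided `q ≥ 0`; the same estimate shows that
`Â − G` has no zero-sum null vector. To drop the proviso `q ≥ 0`, follow the normalised null vector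
`q(t)` of `Â − t(Â − A)` for `t ∈ [0, 1]`: it is `(Â − t(Â − A) + 11ᵀ)⁻¹ 1`, hence continuous,
it starts at `π̂`, ends at `π`, and by the above it can never reach the boundary of the simplex.
-/

open Matrix

/-- `φ(A) = max_{j∈[n]} max_{i∈[n]} |(1ᵀA_j⁻¹ − πᵀ)_i|`, where `A_j` is `A` with its
`j`-th column replaced by the all-ones vector and `π` is the unique element of `S_n`
with `πᵀA = 0ᵀ` (passed explicitly). -/
noncomputable def phi {n : ℕ} (A : Matrix (Fin n) (Fin n) ℝ) (π : Fin n → ℝ) : ℝ :=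
  ⨆ j : Fin n, ⨆ i : Fin n, |((1 : Fin n → ℝ) ᵥ* (A.updateCol j 1)⁻¹ - π) i|

variable {ι K : Type*} [Fintype ι]

theorem pos_of_continuousOn_Icc [Nonempty ι] {f : ℝ → ι → ℝ} {a b : ℝ} (hab : a ≤ b)
    (hf : ContinuousOn f (Set.Icc a b)) (ha : ∀ i, 0 < f a i)
    (hpos : ∀ t ∈ Set.Icc a b, 0 ≤ f t → ∀ i, 0 < f t i) (i : ι) : 0 < f b i := by
  set g : ℝ → ℝ := fun t => Finset.univ.inf' Finset.univ_nonempty (f t)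
  have hg : ContinuousOn g (Set.Icc a b) :=
    ContinuousOn.finset_inf'_apply _ fun i _ => (continuous_apply i).comp_continuousOn hf
  suffices 0 < g b from this.trans_le (Finset.inf'_le _ (Finset.mem_univ i))
  by_contra! hgb
  obtain ⟨t, ht, hgt⟩ := intermediate_value_Icc' hab hg
    ⟨hgb, ((Finset.lt_inf'_iff _).mpr fun i _ => ha i).le⟩
  obtain ⟨j, -, hj⟩ := Finset.exists_mem_eq_inf' Finset.univ_nonempty (f t)
  have hnn : 0 ≤ f t := fun k => (hgt.symm.trans_le (Finset.inf'_le _ (Finset.mem_univ k)) :)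
  exact (hpos t ht hnn j).ne' (hj ▸ hgt)

theorem ContinuousOn.matrix_inv_mulVec [DecidableEq ι] {X : Type*} [TopologicalSpace X]
    {S : X → Matrix ι ι ℝ} (hS : Continuous S) {s : Set X} (hdet : ∀ x ∈ s, IsUnit (S x).det)
    (v : ι → ℝ) : ContinuousOn (fun x => (S x)⁻¹ *ᵥ v) s := by
  intro x hx
  have hinv : ContinuousAt Inv.inv (S x) := continuousAt_matrix_inv _ <| by
    simpa using NormedRing.inverse_continuousAt (hdet x hx).unit
  exact (((continuous_id.matrix_mulVec continuous_const).continuousAt).comp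
    (hinv.comp hS.continuousAt)).continuousWithinAt

namespace Matrix

theorem vecMul_eq_neg_mulVec_of_transpose_eq_neg [CommRing K] {M : Matrix ι ι K}
    (hM : Mᵀ = -M) (v : ι → K) : v ᵥ* M = -(M *ᵥ v) := by
  rw [← mulVec_transpose, hM, neg_mulVec]

theorem dotProduct_mulVec_self_eq_zero_of_transpose_eq_neg [CommRing K] [NoZeroDivisors K]
    [CharZero K] {M : Matrix ι ι K} (hM : Mᵀ = -M) (v : ι → K) : v ⬝ᵥ (M *ᵥ v) = 0 := by
  have h : v ⬝ᵥ (M *ᵥ v) = -(v ⬝ᵥ (M *ᵥ v)) := calc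
    _ = (v ᵥ* M) ⬝ᵥ v := dotProduct_mulVec _ _ _
    _ = _ := by rw [vecMul_eq_neg_mulVec_of_transpose_eq_neg hM, neg_dotProduct, dotProduct_comm]
  exact add_self_eq_zero.mp (eq_neg_iff_add_eq_zero.mp h)

theorem ones_mulVec [CommRing K] (v : ι → K) :
    (of fun _ _ => 1 : Matrix ι ι K) *ᵥ v = fun _ => ∑ i, v i := by
  ext; simp [mulVec, dotProduct]

theorem sum_vecMul_mul_eq_zero_of_mulVec_eq_zero [CommRing K] {M : Matrix ι ι K} {p : ι → K}
    (hMp : M *ᵥ p = 0) (u : ι → K) : ∑ i, (u ᵥ* M) i * p i = 0 := by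
  rw [← dotProduct, ← dotProduct_mulVec, hMp, dotProduct_zero]

theorem eq_zero_of_vecMul_eq_zero_of_sum_eq_zero [Field K] {M : Matrix ι ι K} {p u : ι → K}
    (hrank : M.rank = Fintype.card ι - 1) (hp : p ᵥ* M = 0) (hp1 : ∑ i, p i = 1)
    (hu : u ᵥ* M = 0) (hu0 : ∑ i, u i = 0) : u = 0 := by
  have hker : Module.finrank K (LinearMap.ker M.vecMulLinear) = 1 := by
    have hsum := Mᵀ.mulVecLin.finrank_range_add_finrank_ker
    have hcard : 0 < Fintype.card ι := Finset.card_pos.mpr <|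
      Finset.nonempty_of_sum_ne_zero (hp1 ▸ one_ne_zero)
    rw [← rank, rank_transpose, hrank, Module.finrank_fintype_fun_eq_card,
      mulVecLin_transpose] at hsum
    omega
  have hp0 : (⟨p, hp⟩ : LinearMap.ker M.vecMulLinear) ≠ 0 := by
    rintro ⟨⟩
    simp at hp1
  obtain ⟨r, hr⟩ := (finrank_eq_one_iff_of_nonzero' _ hp0).mp hker ⟨u, hu⟩
  have hur : u = r • p := congrArg Subtype.val hr.symm
  have hr0 : r = 0 := by simpa [hur, ← Finset.mul_sum, hp1] using hu0
  simp [hur, hr0]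

theorem abs_vecMul_apply_le {G : Matrix ι ι ℝ} {c : ℝ} (hG : ∀ i j, |G i j| ≤ c) (q : ι → ℝ)
    (k : ι) : |(q ᵥ* G) k| ≤ c * ∑ i, |q i| :=
  calc |(q ᵥ* G) k| ≤ ∑ i, |q i| * |G i k| := by
        simpa only [vecMul, dotProduct, abs_mul] using
          Finset.abs_sum_le_sum_abs (fun i => q i * G i k) Finset.univ
    _ ≤ ∑ i, |q i| * c := by gcongr with i; exact hG i k
    _ = c * ∑ i, |q i| := by rw [← Finset.sum_mul, mul_comm]

section Skew

variable {B : Matrix ι ι ℝ}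

theorem dotProduct_add_ones_mulVec_self (hB : Bᵀ = -B) (v : ι → ℝ) :
    v ⬝ᵥ ((B + of fun _ _ => 1) *ᵥ v) = (∑ i, v i) ^ 2 := by
  rw [add_mulVec, dotProduct_add, dotProduct_mulVec_self_eq_zero_of_transpose_eq_neg hB, zero_add,
    ones_mulVec]
  simp [dotProduct, ← Finset.sum_mul, sq]

theorem add_ones_mulVec_eq_one (hB : Bᵀ = -B) {x : ι → ℝ} (hx : x ᵥ* B = 0)
    (hx1 : ∑ i, x i = 1) : (B + of fun _ _ => 1) *ᵥ x = 1 := by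
  have hBx : B *ᵥ x = 0 := by
    rw [← neg_eq_zero, ← vecMul_eq_neg_mulVec_of_transpose_eq_neg hB, hx]
  ext
  simp [add_mulVec, ones_mulVec, hBx, hx1]

theorem sum_eq_one_of_add_ones_mulVec_eq_one [Nonempty ι] (hB : Bᵀ = -B) {q : ι → ℝ}
    (hq : (B + of fun _ _ => 1) *ᵥ q = 1) (hq0 : 0 ≤ q) : ∑ i, q i = 1 ∧ q ᵥ* B = 0 := by
  have hquad : (∑ i, q i) * (∑ i, q i - 1) = 0 := by
    have h := dotProduct_add_ones_mulVec_self hB q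
    rw [hq, dotProduct_one] at h
    linear_combination -h
  have hsum : ∑ i, q i = 1 := by
    refine sub_eq_zero.mp ((mul_eq_zero.mp hquad).resolve_left fun h0 => ?_)
    have hq_zero : q = 0 :=
      funext ((Finset.sum_eq_zero_iff_of_nonneg fun i _ => hq0 i).mp h0 · (Finset.mem_univ _))
    have := congrFun hq (Classical.arbitrary ι)
    simp [hq_zero] at this
  rw [add_mulVec, ones_mulVec, hsum] at hq
  refine ⟨hsum, ?_⟩
  rw [vecMul_eq_neg_mulVec_of_transpose_eq_neg hB, neg_eq_zero]
  ext i
  simpa using congrFun hq i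

theorem isUnit_det_add_ones [DecidableEq ι] (hB : Bᵀ = -B)
    (hker : ∀ u, u ᵥ* B = 0 → ∑ i, u i = 0 → u = 0) : IsUnit (B + of fun _ _ => 1).det := by
  rw [isUnit_iff_ne_zero, Ne, ← exists_mulVec_eq_zero_iff]
  rintro ⟨v, hv0, hv⟩
  have hsum : ∑ i, v i = 0 := by
    simpa [hv] using (dotProduct_add_ones_mulVec_self hB v).symm
  have hBv : B *ᵥ v = 0 := by
    rwa [add_mulVec, ones_mulVec, hsum, ← Pi.zero_def, add_zero] at hv
  exact hv0 (hker v (by rw [vecMul_eq_neg_mulVec_of_transpose_eq_neg hB, hBv, neg_zero]) hsum)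

end Skew

variable [DecidableEq ι]

section Field

variable [Field K] {M : Matrix ι ι K} {p : ι → K} {j : ι}

theorem isUnit_det_updateCol_one (hMp : M *ᵥ p = 0)
    (hker : ∀ u, u ᵥ* M = 0 → ∑ i, u i = 0 → u = 0) (hpj : p j ≠ 0) :
    IsUnit (M.updateCol j 1).det := by
  rw [isUnit_iff_ne_zero, Ne, ← exists_vecMul_eq_zero_iff]
  rintro ⟨u, hu0, hu⟩
  rw [vecMul_updateCol] at hu
  have hsum : ∑ i, u i = 0 := by simpa [dotProduct] using congrFun hu j
  have hoff : ∀ k ≠ j, (u ᵥ* M) k = 0 := fun k hk => by simpa [hk] using congrFun hu k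
  have hj : (u ᵥ* M) j = 0 := by
    have h := sum_vecMul_mul_eq_zero_of_mulVec_eq_zero hMp u
    rw [Finset.sum_eq_single j (fun k _ hk => by rw [hoff k hk, zero_mul]) (by simp)] at h
    exact (mul_eq_zero.mp h).resolve_right hpj
  refine hu0 (hker u (funext fun k => ?_) hsum)
  by_cases hk : k = j
  · simp [hk, hj]
  · simp [hoff k hk]

theorem vecMul_eq_of_vecMul_updateCol_one_eq_one (hMp : M *ᵥ p = 0) (hp1 : ∑ i, p i = 1)
    (hpj : p j ≠ 0) {y : ι → K} (hy : y ᵥ* M.updateCol j 1 = 1) :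
    ∑ i, y i = 1 ∧ y ᵥ* M = 1 - (p j)⁻¹ • Pi.single j 1 := by
  rw [vecMul_updateCol] at hy
  have hoff : ∀ k ≠ j, (y ᵥ* M) k = 1 := fun k hk => by simpa [hk] using congrFun hy k
  have hj : (y ᵥ* M) j = 1 - (p j)⁻¹ := by
    have h := sum_vecMul_mul_eq_zero_of_mulVec_eq_zero hMp y
    rw [← Finset.add_sum_erase _ _ (Finset.mem_univ j),
      Finset.sum_congr rfl fun i hi => by rw [hoff i (Finset.ne_of_mem_erase hi), one_mul],
      Finset.sum_erase_eq_sub (Finset.mem_univ j), hp1] at h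
    field_simp
    linear_combination h
  refine ⟨by simpa [dotProduct] using congrFun hy j, funext fun k => ?_⟩
  by_cases hk : k = j
  · simp [hk, hj]
  · simp [hoff k hk, hk]

theorem eq_neg_sum_smul_of_sum_eq_zero (hMp : M *ᵥ p = 0) (hp1 : ∑ i, p i = 1)
    (hp0 : ∀ j, p j ≠ 0) (hker : ∀ u, u ᵥ* M = 0 → ∑ i, u i = 0 → u = 0)
    {w : ι → K} (hw : ∑ i, w i = 0) :
    w = -∑ j, (p j * (w ᵥ* M) j) • (1 ᵥ* (M.updateCol j 1)⁻¹) := by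
  have hy j := vecMul_eq_of_vecMul_updateCol_one_eq_one hMp hp1 (hp0 j)
    (y := 1 ᵥ* (M.updateCol j 1)⁻¹) (by
      rw [vecMul_vecMul, nonsing_inv_mul _ (isUnit_det_updateCol_one hMp hker (hp0 j)),
        vecMul_one])
  have hvp : ∑ j, p j * (w ᵥ* M) j = 0 := by
    simpa only [mul_comm] using sum_vecMul_mul_eq_zero_of_mulVec_eq_zero hMp w
  refine (sub_eq_zero.mp (hker _ ?_ ?_)).symm
  · rw [sub_vecMul, neg_vecMul, sum_vecMul]
    simp only [smul_vecMul, (hy _).2]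
    ext k
    simp [Pi.single_apply, mul_sub, Finset.sum_sub_distrib, hvp, mul_right_comm _ _ (p _)⁻¹,
      mul_inv_cancel₀ (hp0 k)]
  · simp [Finset.sum_comm (f := fun i j => _), ← Finset.mul_sum, hy, hvp, hw]

end Field

section Real

variable {M F G : Matrix ι ι ℝ} {p q : ι → ℝ} {Φ c : ℝ}

theorem abs_le_of_sum_eq_zero (hMp : M *ᵥ p = 0) (hp1 : ∑ i, p i = 1) (hpos : ∀ i, 0 < p i)
    (hker : ∀ u, u ᵥ* M = 0 → ∑ i, u i = 0 → u = 0)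
    (hΦ : ∀ j i, |(1 ᵥ* (M.updateCol j 1)⁻¹ - p) i| ≤ Φ) {w : ι → ℝ} (hw : ∑ i, w i = 0)
    (i : ι) : |w i| ≤ Φ * ∑ j, p j * |(w ᵥ* M) j| := by
  have hvp : ∑ j, p j * (w ᵥ* M) j = 0 := by
    simpa only [mul_comm] using sum_vecMul_mul_eq_zero_of_mulVec_eq_zero hMp w
  have hrep : w i = -∑ j, p j * (w ᵥ* M) j * (1 ᵥ* (M.updateCol j 1)⁻¹ - p) i := by
    conv_lhs => rw [eq_neg_sum_smul_of_sum_eq_zero hMp hp1 (fun j => (hpos j).ne') hker hw]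
    simp [mul_sub, Finset.sum_sub_distrib, ← Finset.sum_mul, hvp]
  calc |w i| ≤ ∑ j, |p j * (w ᵥ* M) j * (1 ᵥ* (M.updateCol j 1)⁻¹ - p) i| := by
        rw [hrep, abs_neg]; exact Finset.abs_sum_le_sum_abs _ _
    _ ≤ ∑ j, p j * |(w ᵥ* M) j| * Φ := by
        gcongr with j
        rw [abs_mul, abs_mul, abs_of_pos (hpos j)]
        exact mul_le_mul_of_nonneg_left (hΦ j i) (mul_nonneg (hpos j).le (abs_nonneg _))
    _ = Φ * ∑ j, p j * |(w ᵥ* M) j| := by rw [← Finset.sum_mul, mul_comm]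

theorem abs_sub_sum_mul_le (hp : p ᵥ* M = 0) (hMp : M *ᵥ p = 0) (hp1 : ∑ i, p i = 1)
    (hpos : ∀ i, 0 < p i) (hker : ∀ u, u ᵥ* M = 0 → ∑ i, u i = 0 → u = 0)
    (hΦ : ∀ j i, |(1 ᵥ* (M.updateCol j 1)⁻¹ - p) i| ≤ Φ) {G : Matrix ι ι ℝ}
    (hG : ∀ i j, |G i j| ≤ c) {q : ι → ℝ} (hq : q ᵥ* (M - G) = 0) (i : ι) :
    |q i - (∑ j, q j) * p i| ≤ Φ * c * ∑ j, |q j| := by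
  set w := q - (∑ j, q j) • p
  have hw : ∑ i, w i = 0 := by simp [w, Finset.sum_sub_distrib, ← Finset.mul_sum, hp1]
  have hwM : w ᵥ* M = q ᵥ* G := by
    rw [vecMul_sub, sub_eq_zero] at hq
    rw [sub_vecMul, smul_vecMul, hp, smul_zero, sub_zero, hq]
  have hΦ0 : 0 ≤ Φ := (abs_nonneg _).trans (hΦ i i)
  calc |q i - (∑ j, q j) * p i| = |w i| := by simp [w]
    _ ≤ Φ * ∑ k, p k * |(q ᵥ* G) k| := hwM ▸ abs_le_of_sum_eq_zero hMp hp1 hpos hker hΦ hw i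
    _ ≤ Φ * ∑ k, p k * (c * ∑ j, |q j|) := by
        gcongr with k
        · exact (hpos k).le
        · exact abs_vecMul_apply_le hG q k
    _ = Φ * c * ∑ j, |q j| := by rw [← Finset.sum_mul, hp1]; ring

theorem eq_zero_of_vecMul_sub_eq_zero (hp : p ᵥ* M = 0) (hMp : M *ᵥ p = 0)
    (hp1 : ∑ i, p i = 1) (hpos : ∀ i, 0 < p i) (hker : ∀ u, u ᵥ* M = 0 → ∑ i, u i = 0 → u = 0)
    (hΦ : ∀ j i, |(1 ᵥ* (M.updateCol j 1)⁻¹ - p) i| ≤ Φ) (hG : ∀ i j, |G i j| ≤ c)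
    (hsmall : ∀ i, Φ * c < p i) (hq : q ᵥ* (M - G) = 0) (hq0 : ∑ i, q i = 0) : q = 0 := by
  have hbound i : |q i| ≤ Φ * c * ∑ j, |q j| := by
    simpa [hq0] using abs_sub_sum_mul_le hp hMp hp1 hpos hker hΦ hG hq i
  by_contra hne
  have hnorm : 0 < ∑ j, |q j| := by
    obtain ⟨j, hj⟩ := Function.ne_iff.mp hne
    exact Finset.sum_pos' (fun j _ => abs_nonneg _) ⟨j, Finset.mem_univ j, abs_pos.mpr hj⟩
  have hlt : ∑ i, |q i| < ∑ i, p i * ∑ j, |q j| :=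
    Finset.sum_lt_sum_of_nonempty (Finset.nonempty_of_sum_ne_zero (hp1 ▸ one_ne_zero))
      fun i _ => (hbound i).trans_lt (mul_lt_mul_of_pos_right (hsmall i) hnorm)
  rw [← Finset.sum_mul, hp1, one_mul] at hlt
  exact lt_irrefl _ hlt

theorem pos_of_nonneg_of_vecMul_sub_eq_zero (hp : p ᵥ* M = 0) (hMp : M *ᵥ p = 0)
    (hp1 : ∑ i, p i = 1) (hpos : ∀ i, 0 < p i) (hker : ∀ u, u ᵥ* M = 0 → ∑ i, u i = 0 → u = 0)
    (hΦ : ∀ j i, |(1 ᵥ* (M.updateCol j 1)⁻¹ - p) i| ≤ Φ) (hG : ∀ i j, |G i j| ≤ c)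
    (hsmall : ∀ i, Φ * c < p i) (hq : q ᵥ* (M - G) = 0) (hq1 : ∑ i, q i = 1) (hq0 : 0 ≤ q)
    (i : ι) : 0 < q i := by
  have h := abs_sub_sum_mul_le hp hMp hp1 hpos hker hΦ hG hq i
  simp only [fun j => abs_of_nonneg (hq0 j), hq1, one_mul, mul_one] at h
  linarith [(abs_le.mp h).1, hsmall i]

theorem pos_of_vecMul_sub_eq_zero (hM : Mᵀ = -M) (hF : Fᵀ = -F) (hp : p ᵥ* M = 0)
    (hp1 : ∑ i, p i = 1) (hpos : ∀ i, 0 < p i) (hker : ∀ u, u ᵥ* M = 0 → ∑ i, u i = 0 → u = 0)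
    (hΦ : ∀ j i, |(1 ᵥ* (M.updateCol j 1)⁻¹ - p) i| ≤ Φ) (hFc : ∀ i j, |F i j| ≤ c)
    (hsmall : ∀ i, Φ * c < p i) {π : ι → ℝ} (hπ : π ᵥ* (M - F) = 0) (hπ1 : ∑ i, π i = 1) :
    ∀ i, 0 < π i := by
  have : Nonempty ι :=
    Finset.univ_nonempty_iff.mp (Finset.nonempty_of_sum_ne_zero (hp1 ▸ one_ne_zero))
  have hMp : M *ᵥ p = 0 := by
    rw [← neg_eq_zero, ← vecMul_eq_neg_mulVec_of_transpose_eq_neg hM, hp]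
  set B : ℝ → Matrix ι ι ℝ := fun t => M - t • F
  have hB t : (B t)ᵀ = -B t := by
    simp only [B, transpose_sub, transpose_smul, hM, hF, smul_neg]
    abel
  have htF t (ht : t ∈ Set.Icc (0 : ℝ) 1) i j : |(t • F) i j| ≤ c := by
    rw [smul_apply, smul_eq_mul, abs_mul, abs_of_nonneg ht.1]
    exact (mul_le_of_le_one_left (abs_nonneg _) ht.2).trans (hFc i j)
  have hS t (ht : t ∈ Set.Icc (0 : ℝ) 1) : IsUnit (B t + of fun _ _ => 1).det :=
    isUnit_det_add_ones (hB t) fun _ hu hu0 =>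
      eq_zero_of_vecMul_sub_eq_zero hp hMp hp1 hpos hker hΦ (htF t ht) hsmall hu hu0
  -- the null vector of `B t` normalised to sum one, in a form that is visibly continuous in `t`
  set q : ℝ → ι → ℝ := fun t => (B t + of fun _ _ => 1)⁻¹ *ᵥ 1
  have hq_eq t (ht : t ∈ Set.Icc (0 : ℝ) 1) x (hx : x ᵥ* B t = 0) (hx1 : ∑ i, x i = 1) :
      q t = x := by
    simp only [q, ← add_ones_mulVec_eq_one (hB t) hx hx1]
    rw [mulVec_mulVec, nonsing_inv_mul _ (hS t ht), one_mulVec]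
  have hq0 : q 0 = p := hq_eq 0 ⟨le_rfl, zero_le_one⟩ p (by simpa [B] using hp) hp1
  have hq1 : q 1 = π := hq_eq 1 ⟨zero_le_one, le_rfl⟩ π (by simpa [B] using hπ) hπ1
  rw [← hq1]
  refine pos_of_continuousOn_Icc zero_le_one
    (ContinuousOn.matrix_inv_mulVec (by fun_prop) hS 1) (hq0 ▸ hpos) fun t ht hqt => ?_
  have hSq : (B t + of fun _ _ => 1) *ᵥ q t = 1 := by
    rw [mulVec_mulVec, mul_nonsing_inv _ (hS t ht), one_mulVec]
  obtain ⟨hsum, hqB⟩ := sum_eq_one_of_add_ones_mulVec_eq_one (hB t) hSq hqt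
  exact pos_of_nonneg_of_vecMul_sub_eq_zero hp hMp hp1 hpos hker hΦ (htF t ht) hsmall hqB hsum hqt

end Real

end Matrix

theorem abs_apply_le_phi {n : ℕ} (A : Matrix (Fin n) (Fin n) ℝ) (π : Fin n → ℝ) (j i : Fin n) :
    |((1 : Fin n → ℝ) ᵥ* (A.updateCol j 1)⁻¹ - π) i| ≤ phi A π :=
  (le_ciSup (Set.finite_range _).bddAbove i).trans
    (le_ciSup (f := fun j => ⨆ i, |((1 : Fin n → ℝ) ᵥ* (A.updateCol j 1)⁻¹ - π) i|)
      (Set.finite_range _).bddAbove j)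

theorem stmt7_general (n : ℕ)
    (A Ahat : Matrix (Fin n) (Fin n) ℝ)
    (hskewA : Aᵀ = -A) (hskewAhat : Ahatᵀ = -Ahat)
    (hrankAhat : Ahat.rank = n - 1)
    (π : Fin n → ℝ) (hπ1 : ∑ i, π i = 1) (hπ : π ᵥ* A = 0)
    (πhat : Fin n → ℝ) (hπhat1 : ∑ i, πhat i = 1) (hπhat : πhat ᵥ* Ahat = 0)
    (hπhatpos : ∀ i, 0 < πhat i)
    (hclose : ∀ i j, |Ahat i j - A i j| < (⨅ i, πhat i) / phi Ahat πhat) :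
    ∀ i, 0 < π i := by
  have : Nonempty (Fin n) :=
    Finset.univ_nonempty_iff.mp (Finset.nonempty_of_sum_ne_zero (hπhat1 ▸ one_ne_zero))
  obtain ⟨⟨i₀, j₀⟩, hmax⟩ :=
    Finite.exists_max fun ij : Fin n × Fin n => |Ahat ij.1 ij.2 - A ij.1 ij.2|
  have hΦ0 : 0 ≤ phi Ahat πhat := (abs_nonneg _).trans (abs_apply_le_phi Ahat πhat i₀ i₀)
  -- `φ(Â) = 0` would make the bound in `hclose` equal to `π̂_min / 0 = 0`
  have hΦpos : 0 < phi Ahat πhat :=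
    ((div_pos_iff.mp ((abs_nonneg _).trans_lt (hclose i₀ i₀))).resolve_right
      fun h => h.2.not_ge hΦ0).2
  have hsmall i : phi Ahat πhat * |Ahat i₀ j₀ - A i₀ j₀| < πhat i :=
    ((lt_div_iff₀' hΦpos).mp (hclose i₀ j₀)).trans_le (ciInf_le (Set.finite_range _).bddBelow i)
  refine Matrix.pos_of_vecMul_sub_eq_zero hskewAhat (F := Ahat - A)
    (by rw [transpose_sub, hskewAhat, hskewA, neg_sub_neg, neg_sub]) hπhat hπhat1 hπhatpos
    (fun _ hu hu0 => Matrix.eq_zero_of_vecMul_eq_zero_of_sum_eq_zero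
      (by rwa [Fintype.card_fin]) hπhat hπhat1 hu hu0)
    (abs_apply_le_phi Ahat πhat) (fun i j => hmax (i, j)) hsmall (by rwa [sub_sub_cancel]) hπ1

/-- Under Condition 1 for both `A` and `Â`, with Nash-kernel vectors
`π, π̂ ∈ S_n`, if `π̂ ∈ S_n⁺⁺` and `max_{i,j} |â_ij − a_ij| < π̂_min / φ(Â)`,
then `π ∈ S_n⁺⁺`. -/
theorem stmt7 (n : ℕ) (hodd : Odd n) (hn : 3 ≤ n)
    (A Ahat : Matrix (Fin n) (Fin n) ℝ)
    (hboundA : ∀ i j, A i j ∈ Set.Icc (-1 : ℝ) 1)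
    (hboundAhat : ∀ i j, Ahat i j ∈ Set.Icc (-1 : ℝ) 1)
    (hskewA : Aᵀ = -A) (hskewAhat : Ahatᵀ = -Ahat)
    (hrankA : A.rank = n - 1) (hrankAhat : Ahat.rank = n - 1)
    (hkerA : ∃ x : Fin n → ℝ, x ≠ 0 ∧ x ᵥ* A = 0 ∧ ∑ i, x i ≠ 0)
    (hkerAhat : ∃ x : Fin n → ℝ, x ≠ 0 ∧ x ᵥ* Ahat = 0 ∧ ∑ i, x i ≠ 0)
    (π : Fin n → ℝ) (hπ1 : ∑ i, π i = 1) (hπ : π ᵥ* A = 0)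
    (πhat : Fin n → ℝ) (hπhat1 : ∑ i, πhat i = 1) (hπhat : πhat ᵥ* Ahat = 0)
    (hπhatpos : ∀ i, 0 < πhat i)
    (hclose : ∀ i j, |Ahat i j - A i j| < (⨅ i, πhat i) / phi Ahat πhat) :
    ∀ i, 0 < π i :=
  stmt7_general n A Ahat hskewA hskewAhat hrankAhat π hπ1 hπ πhat hπhat1 hπhat hπhatpos hclose
end

section
/- Let A be an n×n real skew-symmetric matrix with n ≥ 2. If n is even, then A is not non-redundant (some Nash equilibrium of A is not completely mixed). If n ≥ 3 is odd, then A is non-redundant if and only if rank(A) = n−1 and the equation xᵀA = 0ᵀ has a solution x with every coordinate strictly positive. -/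
open Matrix

/-- `π` is a Nash equilibrium of the (skew-symmetric) pay-off matrix `A`:
`π ∈ S_n⁺` and `πᵀAy ≥ 0` for every `y ∈ S_n⁺`. -/
def IsNashEq {n : ℕ} (A : Matrix (Fin n) (Fin n) ℝ) (π : Fin n → ℝ) : Prop :=
  (∑ i, π i = 1) ∧ (∀ i, 0 ≤ π i) ∧
    ∀ y : Fin n → ℝ, (∑ i, y i = 1) → (∀ i, 0 ≤ y i) → 0 ≤ π ᵥ* A ⬝ᵥ y

/-!
A skew-symmetric game always has an equilibrium: by Ville's alternative (a separation argument)
either some `π ∈ S_n⁺` has `Aπ ≤ 0`, or some `y ∈ S_n⁺` has `yᵀA > 0`, and the latter contradicts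
`yᵀAy = 0`. Complementary slackness does the rest: a completely mixed equilibrium `π` has
`πᵀA = 0` because `πᵀAπ = 0`, and if some `x > 0` has `xᵀA = 0` then every equilibrium lies in
`ker A`. If all equilibria are completely mixed, `ker A` is a line: subtracting from `v ∈ ker A`
the largest multiple of `π` that keeps it nonnegative leaves a point of `ker A` on the boundary of
the orthant, which must vanish. Conversely a line through a positive vector meets `S_n⁺` only in
positive points. Finally `rank A` is even, because `(u, v) ↦ uᵀAv` is a nondegenerate alternating
form on `range A` (as `range A ∩ ker A = 0`), so `rank A = n - 1` forces `n` odd.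
-/

open Module Submodule
open LinearMap (BilinForm)

lemma Matrix.det_eq_zero_of_transpose_eq_neg {ι R : Type*} [Fintype ι] [DecidableEq ι]
    [CommRing R] [NoZeroDivisors R] [CharZero R] {M : Matrix ι ι R} (hM : Mᵀ = -M)
    (hodd : Odd (Fintype.card ι)) : M.det = 0 := by
  have : M.det = -M.det := by
    conv_lhs => rw [← det_transpose, hM, det_neg, hodd.neg_one_pow, neg_one_mul]
  exact CharZero.eq_neg_self_iff.mp this

lemma LinearMap.BilinForm.even_finrank_of_isAlt {K V : Type*} [Field K] [CharZero K]
    [AddCommGroup V] [Module K V] [FiniteDimensional K V] {B : BilinForm K V}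
    (hB : B.IsAlt) (hnd : B.Nondegenerate) : Even (finrank K V) := by
  let b := finBasis K V
  have hskew : (BilinForm.toMatrix b B)ᵀ = -BilinForm.toMatrix b B := by
    ext i j
    simp [BilinForm.toMatrix_apply, ← LinearMap.IsAlt.neg hB (b i) (b j)]
  by_contra hodd
  refine (nondegenerate_iff_det_ne_zero b).mp hnd (det_eq_zero_of_transpose_eq_neg hskew ?_)
  simpa using hodd

section SkewSymmetric

variable {ι R : Type*} [Fintype ι] [CommRing R] {A : Matrix ι ι R}

lemma Matrix.vecMul_eq_neg_mulVec (hA : Aᵀ = -A) (x : ι → R) : x ᵥ* A = -(A *ᵥ x) := by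
  rw [← mulVec_transpose, hA, neg_mulVec]

lemma Matrix.vecMul_eq_zero_iff (hA : Aᵀ = -A) {x : ι → R} : x ᵥ* A = 0 ↔ A *ᵥ x = 0 := by
  rw [vecMul_eq_neg_mulVec hA, neg_eq_zero]

lemma Matrix.dotProduct_mulVec_eq_neg (hA : Aᵀ = -A) (x y : ι → R) :
    x ⬝ᵥ (A *ᵥ y) = -((A *ᵥ x) ⬝ᵥ y) := by
  rw [dotProduct_mulVec, vecMul_eq_neg_mulVec hA, neg_dotProduct]

variable [LinearOrder R] [IsStrictOrderedRing R]

lemma Matrix.dotProduct_mulVec_self (hA : Aᵀ = -A) (x : ι → R) : x ⬝ᵥ (A *ᵥ x) = 0 := by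
  have := dotProduct_mulVec_eq_neg hA x x
  rw [dotProduct_comm (A *ᵥ x)] at this
  linarith

lemma Matrix.eq_zero_of_mulVec_eq_zero_of_mem_range (hA : Aᵀ = -A) {x : ι → R}
    (hx : x ∈ LinearMap.range A.mulVecLin) (hAx : A *ᵥ x = 0) : x = 0 := by
  obtain ⟨y, rfl⟩ := hx
  rw [mulVecLin_apply] at hAx ⊢
  refine dotProduct_self_eq_zero.mp ?_
  rw [dotProduct_comm, dotProduct_mulVec_eq_neg hA, hAx, zero_dotProduct, neg_zero]

end SkewSymmetric

lemma Matrix.even_rank_of_transpose_eq_neg {ι K : Type*} [Fintype ι] [Field K] [LinearOrder K] [IsStrictOrderedRing K]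
    {A : Matrix ι ι K} (hA : Aᵀ = -A) : Even A.rank := by
  classical
  let B := (toBilin' A).restrict (LinearMap.range A.mulVecLin)
  have hB : B.IsAlt := fun x => by simp [B, toBilin'_apply', dotProduct_mulVec_self hA]
  refine BilinForm.even_finrank_of_isAlt hB
    (LinearMap.IsAlt.isRefl hB |>.nondegenerate_iff_separatingLeft.mpr fun x hx => ?_)
  have hAx : A *ᵥ x = 0 := by
    refine dotProduct_self_eq_zero.mp (neg_eq_zero.mp ?_)
    have := hx ⟨A *ᵥ x, x, mulVecLin_apply A x⟩
    simp only [B, BilinForm.restrict_apply, LinearMap.domRestrict_apply, toBilin'_apply'] at this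
    rwa [dotProduct_mulVec_eq_neg hA] at this
  exact Subtype.ext (eq_zero_of_mulVec_eq_zero_of_mem_range hA x.2 hAx)

section StdSimplex

variable {ι : Type*} [Fintype ι]

lemma inv_sum_smul_mem_stdSimplex {w : ι → ℝ} (hw : 0 < w) :
    (∑ i, w i)⁻¹ • w ∈ stdSimplex ℝ ι := by
  have hpos : 0 < ∑ i, w i := Fintype.sum_pos hw
  refine ⟨fun i => mul_nonneg (inv_nonneg.mpr hpos.le) (hw.le i), ?_⟩
  simp [← Finset.mul_sum, hpos.ne']

lemma dotProduct_pos_of_mem_stdSimplex {z y : ι → ℝ} (hz : ∀ i, 0 < z i)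
    (hy : y ∈ stdSimplex ℝ ι) : 0 < z ⬝ᵥ y := by
  obtain ⟨i, -, hi⟩ := Finset.exists_lt_of_sum_lt (s := Finset.univ) (f := 0) (g := y)
    (by simp [hy.2])
  exact Finset.sum_pos' (fun j _ => mul_nonneg (hz j).le (hy.1 j))
    ⟨i, Finset.mem_univ _, mul_pos (hz i) hi⟩

lemma eq_zero_of_dotProduct_eq_zero_of_pos {x z : ι → ℝ} (hx : ∀ i, 0 < x i) (hz : 0 ≤ z)
    (h : x ⬝ᵥ z = 0) : z = 0 := by
  have := (Finset.sum_eq_zero_iff_of_nonneg fun i _ => mul_nonneg (hx i).le (hz i)).mp h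
  funext i
  exact (mul_eq_zero.mp (this i (Finset.mem_univ i))).resolve_left (hx i).ne'

lemma pos_of_mem_stdSimplex_of_mem_span {x π : ι → ℝ} (hx : ∀ i, 0 < x i)
    (hπ : π ∈ stdSimplex ℝ ι) (hπx : π ∈ ℝ ∙ x) (i : ι) : 0 < π i := by
  obtain ⟨t, rfl⟩ := mem_span_singleton.mp hπx
  have hsum : t * ∑ i, x i = 1 := by simpa [Finset.mul_sum] using hπ.2
  have ht : 0 < t := pos_of_mul_pos_left (hsum ▸ one_pos) (Finset.sum_nonneg fun i _ => (hx i).le)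
  exact mul_pos ht (hx i)

lemma Submodule.eq_span_singleton_of_forall_mem_stdSimplex_pos [Nonempty ι]
    {K : Submodule ℝ (ι → ℝ)} {π : ι → ℝ} (hπK : π ∈ K) (hπ : ∀ i, 0 < π i)
    (hK : ∀ w ∈ K, w ∈ stdSimplex ℝ ι → ∀ i, 0 < w i) : K = ℝ ∙ π := by
  refine le_antisymm (fun v hv => ?_) ((span_singleton_le_iff_mem _ _).mpr hπK)
  obtain ⟨i₀, -, hmin⟩ := Finset.univ.exists_min_image (fun i => v i / π i) Finset.univ_nonempty
  set w := v - (v i₀ / π i₀) • π with hw_def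
  have hw : 0 ≤ w := fun i => by
    have := hmin i (Finset.mem_univ i)
    rw [le_div_iff₀ (hπ i)] at this
    simpa [w, sub_nonneg] using this
  have hwi₀ : w i₀ = 0 := by simp [w, (hπ i₀).ne']
  have hw0 : w = 0 := by
    by_contra hw0
    have hwK : w ∈ K := K.sub_mem hv (K.smul_mem _ hπK)
    have := hK _ (K.smul_mem _ hwK) (inv_sum_smul_mem_stdSimplex (hw.lt_of_ne' hw0)) i₀
    simp [hwi₀] at this
  rw [hw_def, sub_eq_zero] at hw0
  exact hw0 ▸ smul_mem _ _ (mem_span_singleton_self π)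

end StdSimplex

lemma LinearMap.nonpos_of_forall_nonpos_lt {E : Type*} [AddCommGroup E] [PartialOrder E]
    [IsOrderedAddMonoid E] [Module ℝ E] [PosSMulMono ℝ E] {f : E →ₗ[ℝ] ℝ} {u : ℝ}
    (hf : ∀ z ≤ 0, f z < u) {z : E} (hz : z ≤ 0) : f z ≤ 0 := by
  by_contra! hpos
  have hu : 0 < u := by simpa using hf 0 le_rfl
  have := hf ((u / f z) • z) (smul_nonpos_of_nonneg_of_nonpos (by positivity) hz)
  rw [map_smul, smul_eq_mul, div_mul_cancel₀ _ hpos.ne'] at this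
  exact lt_irrefl u this

/-- Ville's theorem of the alternative. -/
theorem Matrix.exists_mulVec_nonpos_or_exists_vecMul_pos {m n : Type*} [Fintype m] [Fintype n]
    [Nonempty n] (B : Matrix m n ℝ) :
    (∃ π ∈ stdSimplex ℝ n, B *ᵥ π ≤ 0) ∨ ∃ y ∈ stdSimplex ℝ m, ∀ j, 0 < (y ᵥ* B) j := by
  classical
  refine or_iff_not_imp_left.mpr fun hno => ?_
  have hdisj : Disjoint (Set.Iic 0) (B.mulVecLin '' stdSimplex ℝ n) := by
    rw [Set.disjoint_left]
    rintro _ hz ⟨π, hπ, rfl⟩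
    exact hno ⟨π, hπ, hz⟩
  obtain ⟨f, u, v, hfD, huv, hfC⟩ := geometric_hahn_banach_closed_compact (convex_Iic 0)
    isClosed_Iic ((convex_stdSimplex ℝ n).linear_image B.mulVecLin)
    ((isCompact_stdSimplex ℝ n).image B.mulVecLin.continuous_of_finiteDimensional) hdisj
  let c : m → ℝ := fun i => f (Pi.single i 1)
  have hf (z : m → ℝ) : f z = c ⬝ᵥ z := by
    have hsingle (i : m) : (fun j => if i = j then (1 : ℝ) else 0) = Pi.single i 1 := by
      funext j
      simp [Pi.single_apply, eq_comm]
    simpa [c, dotProduct, mul_comm, hsingle] using f.toLinearMap.pi_apply_eq_sum_univ z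
  have hu : 0 < u := by simpa using hfD 0 Set.self_mem_Iic
  have hBc (j : n) : 0 < c ⬝ᵥ (B *ᵥ Pi.single j 1) := by
    rw [← hf]
    exact hu.trans (huv.trans (hfC _ ⟨_, single_mem_stdSimplex ℝ j, rfl⟩))
  have hc : 0 < c := by
    refine lt_of_le_of_ne (fun i => ?_) fun h => ?_
    · simpa [c] using LinearMap.nonpos_of_forall_nonpos_lt (f := f.toLinearMap) hfD
        (z := -Pi.single i 1) (neg_nonpos.mpr (Pi.single_nonneg.mpr zero_le_one))
    · simpa [← h] using hBc (Classical.arbitrary n)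
  refine ⟨_, inv_sum_smul_mem_stdSimplex hc, fun j => ?_⟩
  have := hBc j
  rw [dotProduct_mulVec, dotProduct_single_one] at this
  rw [smul_vecMul, Pi.smul_apply, smul_eq_mul]
  exact mul_pos (inv_pos.mpr (Fintype.sum_pos hc)) this

section Nash

variable {n : ℕ} {A : Matrix (Fin n) (Fin n) ℝ}

lemma isNashEq_iff {π : Fin n → ℝ} : IsNashEq A π ↔ π ∈ stdSimplex ℝ (Fin n) ∧ 0 ≤ π ᵥ* A := by
  refine ⟨fun ⟨h1, h0, hy⟩ => ⟨⟨h0, h1⟩, fun j => ?_⟩,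
    fun ⟨⟨h0, h1⟩, hA⟩ => ⟨h1, h0, fun y _ hy => dotProduct_nonneg_of_nonneg hA hy⟩⟩
  simpa using hy _ (single_mem_stdSimplex ℝ j).2 (single_mem_stdSimplex ℝ j).1

lemma exists_isNashEq [NeZero n] (hA : Aᵀ = -A) : ∃ π, IsNashEq A π := by
  rcases A.exists_mulVec_nonpos_or_exists_vecMul_pos with ⟨π, hπ, hAπ⟩ | ⟨y, hy, hyA⟩
  · exact ⟨π, isNashEq_iff.mpr ⟨hπ, by simpa [vecMul_eq_neg_mulVec hA] using hAπ⟩⟩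
  · have := dotProduct_pos_of_mem_stdSimplex hyA hy
    rw [← dotProduct_mulVec, dotProduct_mulVec_self hA] at this
    exact absurd this (lt_irrefl 0)

theorem forall_isNashEq_pos_iff [NeZero n] (hA : Aᵀ = -A) :
    (∀ π, IsNashEq A π → ∀ i, 0 < π i) ↔
      ∃ x : Fin n → ℝ, (∀ i, 0 < x i) ∧ LinearMap.ker A.mulVecLin = ℝ ∙ x := by
  constructor
  · intro hcm
    obtain ⟨π, hπ⟩ := exists_isNashEq hA
    have hπpos := hcm π hπ
    have hπA : π ᵥ* A = 0 := eq_zero_of_dotProduct_eq_zero_of_pos hπpos (isNashEq_iff.mp hπ).2 (by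
      rw [vecMul_eq_neg_mulVec hA, dotProduct_neg, dotProduct_mulVec_self hA, neg_zero])
    refine ⟨π, hπpos, eq_span_singleton_of_forall_mem_stdSimplex_pos
      ((vecMul_eq_zero_iff hA).mp hπA) hπpos fun w hw hwΔ => hcm w (isNashEq_iff.mpr ⟨hwΔ, ?_⟩)⟩
    rw [(vecMul_eq_zero_iff hA).mpr hw]
  · rintro ⟨x, hx, hker⟩ π hπ
    obtain ⟨hπΔ, hπA⟩ := isNashEq_iff.mp hπ
    have hAx : A *ᵥ x = 0 := LinearMap.mem_ker.mp (hker ▸ mem_span_singleton_self x)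
    have : π ᵥ* A = 0 := eq_zero_of_dotProduct_eq_zero_of_pos hx hπA (by
      rw [dotProduct_comm, ← dotProduct_mulVec, hAx, dotProduct_zero])
    exact pos_of_mem_stdSimplex_of_mem_span hx hπΔ (hker ▸ (vecMul_eq_zero_iff hA).mp this)

end Nash

lemma Matrix.ker_mulVecLin_eq_span_singleton_iff {m n K : Type*} [Fintype n] [Field K]
    {A : Matrix m n K} {x : n → K} (hx : x ≠ 0) :
    LinearMap.ker A.mulVecLin = K ∙ x ↔ A.rank = Fintype.card n - 1 ∧ A *ᵥ x = 0 := by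
  have hrank := LinearMap.finrank_range_add_finrank_ker A.mulVecLin
  rw [finrank_fintype_fun_eq_card] at hrank
  change A.rank + _ = _ at hrank
  have hcard : 0 < Fintype.card n := by
    obtain ⟨i, -⟩ := Function.ne_iff.mp hx
    exact Fintype.card_pos_iff.mpr ⟨i⟩
  constructor
  · intro hker
    rw [hker, finrank_span_singleton hx] at hrank
    exact ⟨by omega, LinearMap.mem_ker.mp (hker ▸ mem_span_singleton_self x)⟩
  · rintro ⟨hr, hAx⟩
    refine (eq_of_le_of_finrank_le ((span_singleton_le_iff_mem _ _).mpr hAx) ?_).symm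
    rw [finrank_span_singleton hx]
    omega

/-- Kaplansky: Let `A` be an `n×n` real skew-symmetric matrix, `n ≥ 2`.
If `n` is even, `A` is not non-redundant: some Nash equilibrium of `A` is not
completely mixed. If `n` is odd, `A` is non-redundant iff `rank(A) = n−1` and
`xᵀA = 0ᵀ` has a solution `x` with every coordinate strictly positive. -/
theorem stmt19 (n : ℕ) (hn : 2 ≤ n)
    (A : Matrix (Fin n) (Fin n) ℝ) (hskew : Aᵀ = -A) :
    (Even n → ∃ π : Fin n → ℝ, IsNashEq A π ∧ ¬ ∀ i, 0 < π i) ∧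
    (Odd n →
      ((∀ π : Fin n → ℝ, IsNashEq A π → ∀ i, 0 < π i) ↔
        (A.rank = n - 1 ∧ ∃ x : Fin n → ℝ, x ᵥ* A = 0 ∧ ∀ i, 0 < x i))) := by
  have : NeZero n := ⟨by omega⟩
  have hker (x : Fin n → ℝ) (hx : ∀ i, 0 < x i) :
      LinearMap.ker A.mulVecLin = ℝ ∙ x ↔ A.rank = n - 1 ∧ x ᵥ* A = 0 := by
    rw [ker_mulVecLin_eq_span_singleton_iff fun h => (hx 0).ne' (congrFun h 0),
      Fintype.card_fin, vecMul_eq_zero_iff hskew]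
  refine ⟨fun heven => ?_, fun _ => ?_⟩
  · by_contra! hcm
    obtain ⟨x, hx, hx_ker⟩ := (forall_isNashEq_pos_iff hskew).mp hcm
    have hrank := A.even_rank_of_transpose_eq_neg hskew
    rw [((hker x hx).mp hx_ker).1] at hrank
    obtain ⟨k, hk⟩ := heven
    obtain ⟨l, hl⟩ := hrank
    omega
  · rw [forall_isNashEq_pos_iff hskew]
    constructor
    · rintro ⟨x, hx, hx_ker⟩
      exact ⟨((hker x hx).mp hx_ker).1, x, ((hker x hx).mp hx_ker).2, hx⟩
    · rintro ⟨hr, x, hxA, hx⟩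
      exact ⟨x, hx, (hker x hx).mpr ⟨hr, hxA⟩⟩
end
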